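/- Let λ > 0 and β > 0. Then the function x ↦ ∫_0^∞ [ (1/√(2λ)) ( e^{-√(2λ)|x−y|} − e^{-√(2λ)(x+y)} ) + (1/(√λ + βλ)) e^{-√(2λ)(x+y)} ] · 2y² dy, defined on [0,∞), tends to ∞ as x → ∞; in particular it is unbounded on [0,∞). -/

import Mathlib

open Real Set MeasureTheory Filter

/-- The λ-potential of the energy measure `dμ(y) = 2y² dy` of `ln φ`, `φ(x) = e^{-x²/2}`,
with respect to the sticky Brownian resolvent kernel `r_λ^β(x,y)`. -/
noncomputable def stickyPotential (lam β x : ℝ) : ℝ :=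
  ∫ y in Set.Ioi (0 : ℝ),
    ((1 / Real.sqrt (2 * lam)) *
        (Real.exp (-Real.sqrt (2 * lam) * |x - y|) - Real.exp (-Real.sqrt (2 * lam) * (x + y)))
      + (1 / (Real.sqrt lam + β * lam)) * Real.exp (-Real.sqrt (2 * lam) * (x + y)))
      * (2 * y ^ 2)

/-!
The sticky part of the kernel is nonnegative, so the kernel is bounded below by its Dirichlet
part `(e^{-c|x-y|} - e^{-c(x+y)}) / c`, `c = √(2λ)`. On the window `x ≤ y ≤ x + 1` with `x ≥ 1`
this is at least `(e^{-c} - e^{-2c}) / c > 0`, while the density `2y²` is at least `2x²` there.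
Hence the potential grows at least like a positive multiple of `x²`.
-/

theorem integrableOn_pow_mul_exp_neg_mul (n : ℕ) {c : ℝ} (hc : 0 < c) :
    IntegrableOn (fun y : ℝ => y ^ n * exp (-c * y)) (Ioi 0) := by
  refine (integrableOn_rpow_mul_exp_neg_mul_rpow (s := n) (p := 1)
    (by linarith [n.cast_nonneg (α := ℝ)]) one_pos hc).congr_fun (fun y _ => ?_) measurableSet_Ioi
  simp [Real.rpow_natCast]

/-- The resolvent kernel of sticky Brownian motion, with `c = √(2λ)` and `k = 1 / (√λ + βλ)`. -/
noncomputable def stickyKernel (c k x y : ℝ) : ℝ :=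
  (1 / c) * (exp (-c * |x - y|) - exp (-c * (x + y))) + k * exp (-c * (x + y))

section StickyKernel

variable {c k x y : ℝ}

lemma stickyKernel_nonneg (hc : 0 ≤ c) (hk : 0 ≤ k) (hx : 0 ≤ x) (hy : 0 ≤ y) :
    0 ≤ stickyKernel c k x y := by
  have hxy : |x - y| ≤ x + y := abs_sub_le_iff.2 ⟨by linarith, by linarith⟩
  have hexp : exp (-c * (x + y)) ≤ exp (-c * |x - y|) := exp_le_exp.2 (by nlinarith)
  exact add_nonneg (mul_nonneg (by positivity) (sub_nonneg.2 hexp)) (by positivity)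

lemma stickyKernel_le (hc : 0 ≤ c) (hk : 0 ≤ k) (hx : 0 ≤ x) :
    stickyKernel c k x y ≤ (1 / c + k) * exp (c * x) * exp (-c * y) := by
  have hxy : y - x ≤ |x - y| := by rw [abs_sub_comm]; exact le_abs_self _
  have hA : exp (-c * |x - y|) ≤ exp (c * x) * exp (-c * y) := by
    rw [← exp_add]; exact exp_le_exp.2 (by nlinarith)
  have hB : exp (-c * (x + y)) ≤ exp (c * x) * exp (-c * y) := by
    rw [← exp_add]; exact exp_le_exp.2 (by nlinarith)
  have hB0 : 0 ≤ exp (-c * (x + y)) := (exp_pos _).le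
  have hc' : 0 ≤ 1 / c := by positivity
  unfold stickyKernel
  nlinarith [mul_le_mul_of_nonneg_left hA hc', mul_le_mul_of_nonneg_left hB hk,
    mul_nonneg hc' hB0]

lemma stickyKernel_ge_of_mem_Icc (hc : 0 ≤ c) (hk : 0 ≤ k) (hx : 1 ≤ x)
    (hy : y ∈ Icc x (x + 1)) :
    (exp (-c) - exp (-2 * c)) / c ≤ stickyKernel c k x y := by
  obtain ⟨hxy, hyx⟩ := hy
  have hA : exp (-c) ≤ exp (-c * |x - y|) := by
    have : |x - y| ≤ 1 := abs_sub_le_iff.2 ⟨by linarith, by linarith⟩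
    exact exp_le_exp.2 (by nlinarith)
  have hB : exp (-c * (x + y)) ≤ exp (-2 * c) := exp_le_exp.2 (by nlinarith)
  unfold stickyKernel
  have hdirichlet : (exp (-c) - exp (-2 * c)) / c
      ≤ (1 / c) * (exp (-c * |x - y|) - exp (-c * (x + y))) := by
    rw [div_eq_mul_one_div, mul_comm]
    exact mul_le_mul_of_nonneg_left (by linarith) (by positivity)
  linarith [mul_nonneg hk (exp_pos (-c * (x + y))).le]

lemma integrableOn_stickyKernel_mul_sq (hc : 0 < c) (hk : 0 ≤ k) (hx : 0 ≤ x) :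
    IntegrableOn (fun y => stickyKernel c k x y * (2 * y ^ 2)) (Ioi 0) := by
  refine Integrable.mono' ((integrableOn_pow_mul_exp_neg_mul 2 hc).const_mul
    ((1 / c + k) * exp (c * x) * 2)) ?_ ?_
  · exact Continuous.aestronglyMeasurable (by unfold stickyKernel; fun_prop)
  · filter_upwards [ae_restrict_mem measurableSet_Ioi] with y hy
    rw [Real.norm_of_nonneg (mul_nonneg (stickyKernel_nonneg hc.le hk hx (le_of_lt hy))
      (by positivity))]
    calc stickyKernel c k x y * (2 * y ^ 2)
        ≤ (1 / c + k) * exp (c * x) * exp (-c * y) * (2 * y ^ 2) :=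
          mul_le_mul_of_nonneg_right (stickyKernel_le hc.le hk hx) (by positivity)
      _ = (1 / c + k) * exp (c * x) * 2 * (y ^ 2 * exp (-c * y)) := by ring

lemma sq_le_setIntegral_stickyKernel_mul_sq (hc : 0 < c) (hk : 0 ≤ k) (hx : 1 ≤ x) :
    2 * (exp (-c) - exp (-2 * c)) / c * x ^ 2
      ≤ ∫ y in Ioi 0, stickyKernel c k x y * (2 * y ^ 2) := by
  have hint := integrableOn_stickyKernel_mul_sq hc hk (x := x) (by linarith)
  have hwindow : Icc x (x + 1) ⊆ Ioi 0 := fun y hy => mem_Ioi.2 (by linarith [hy.1])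
  have hgap : 0 ≤ (exp (-c) - exp (-2 * c)) / c :=
    div_nonneg (sub_nonneg.2 (exp_le_exp.2 (by linarith))) hc.le
  calc 2 * (exp (-c) - exp (-2 * c)) / c * x ^ 2
      = (exp (-c) - exp (-2 * c)) / c * (2 * x ^ 2) * volume.real (Icc x (x + 1)) := by
        rw [volume_real_Icc_of_le (by linarith)]; ring
    _ ≤ ∫ y in Icc x (x + 1), stickyKernel c k x y * (2 * y ^ 2) := by
        refine setIntegral_ge_of_const_le_real measurableSet_Icc measure_Icc_lt_top.ne
          (fun y hy => ?_) (hint.mono_set hwindow)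
        exact mul_le_mul (stickyKernel_ge_of_mem_Icc hc.le hk hx hy) (by nlinarith [hy.1])
          (by positivity) (stickyKernel_nonneg hc.le hk (by linarith) (by linarith [hy.1]))
    _ ≤ ∫ y in Ioi 0, stickyKernel c k x y * (2 * y ^ 2) := by
        refine setIntegral_mono_set hint ?_ hwindow.eventuallyLE
        filter_upwards [ae_restrict_mem measurableSet_Ioi] with y hy
        exact mul_nonneg (stickyKernel_nonneg hc.le hk (by linarith) (le_of_lt hy))
          (by positivity)

lemma tendsto_setIntegral_stickyKernel_mul_sq_atTop (hc : 0 < c) (hk : 0 ≤ k) :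
    Tendsto (fun x => ∫ y in Ioi 0, stickyKernel c k x y * (2 * y ^ 2)) atTop atTop := by
  have hm : 0 < 2 * (exp (-c) - exp (-2 * c)) / c :=
    div_pos (mul_pos two_pos (sub_pos.2 (exp_lt_exp.2 (by linarith)))) hc
  refine tendsto_atTop_mono' atTop ?_ ((tendsto_pow_atTop two_ne_zero).const_mul_atTop hm)
  filter_upwards [eventually_ge_atTop 1] with x hx
  exact sq_le_setIntegral_stickyKernel_mul_sq hc hk hx

end StickyKernel

/-- For `λ > 0` and `β > 0`, the λ-potential of the measure `2y² dy` with respect to the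
resolvent kernel of sticky Brownian motion tends to `∞` as `x → ∞`; in particular it is
unbounded on `[0,∞)`. Hence this measure is not of (extended) Kato class. -/
theorem stickyPotential_unbounded (lam β : ℝ) (hlam : 0 < lam) (hβ : 0 < β) :
    Filter.Tendsto (fun x : ℝ => stickyPotential lam β x) Filter.atTop Filter.atTop ∧
      ¬ ∃ C : ℝ, ∀ x ∈ Set.Ici (0 : ℝ), stickyPotential lam β x ≤ C := by
  have hc : 0 < √(2 * lam) := Real.sqrt_pos.2 (by linarith)
  have hk : 0 ≤ 1 / (√lam + β * lam) := by positivity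
  have htend : Tendsto (fun x => stickyPotential lam β x) atTop atTop :=
    tendsto_setIntegral_stickyKernel_mul_sq_atTop hc hk
  refine ⟨htend, fun ⟨C, hC⟩ => ?_⟩
  obtain ⟨x, hCx, hx⟩ := ((htend.eventually_gt_atTop C).and (eventually_ge_atTop 0)).exists
  exact (hC x hx).not_gt hCx
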